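/- arXiv:1909.13192 — 5 statements merged into one kernel-verified Lean document; each statement's English description precedes it below -/
import Mathlib

section
/- (Interpolation estimate for distribution functions.) Let 1 ≤ α < ∞. There exists a constant C = C(α) > 0 such that for every measurable f : ℝ³×ℝ³ → [0,∞) with f ∈ L^α(ℝ⁶) and ∫∫_{ℝ⁶} |p|² f(q,p) dq dp < ∞, the spatial density ρ_f satisfies ‖ρ_f‖_{L^{(5α−3)/(3α−1)}(ℝ³)} ≤ C ‖f‖_{L^α(ℝ⁶)}^{2α/(5α−3)} · ( ∫∫_{ℝ⁶} |p|² f(q,p) dq dp )^{3(α−1)/(5α−3)}. -/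
/-!
Fix `x` and split the momentum integral at radius `t`. By Hölder, the ball `|p| < t` contributes
at most `‖f(x,·)‖_α |B_t|^{1-1/α} ∼ t^{3(1-1/α)}`, and the tail at most `t⁻² K(x)` with
`K(x) = ∫ |p|² f(x,p) dp`. Optimizing in `t` gives `ρ_f(x) ≲ ‖f(x,·)‖_α^θ K(x)^{1-θ}` with
`θ = 2α/(5α-3)`; Hölder in `x` with exponents `(3α-1)/2` and `(3α-1)/(3(α-1))` then gives the
estimate, because `∫ ‖f(x,·)‖_α^α dx = ‖f‖_α^α`. For `α = 1` the estimate is `‖ρ_f‖₁ ≤ ‖f‖₁`.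
-/

open MeasureTheory Real

noncomputable section

abbrev E3 := EuclideanSpace ℝ (Fin 3)

/-- The spatial density `ρ_f(x) = ∫ f(x,p) dp` of a phase-space distribution. -/
def rhoOf (f : E3 × E3 → ℝ) (x : E3) : ℝ := ∫ p : E3, f (x, p)

open Metric Module
open scoped ENNReal

theorem ENNReal.le_two_mul_rpow_mul_rpow_of_forall_le {β γ : ℝ} (hβ : 0 < β) (hγ : 0 < γ)
    {A B X : ℝ≥0∞} (hA : A ≠ 0) (hB : B ≠ 0)
    (h : ∀ t : ℝ, 0 < t → X ≤ A * ENNReal.ofReal t ^ β + B * ENNReal.ofReal t ^ (-γ)) :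
    X ≤ 2 * A ^ (γ / (β + γ)) * B ^ (β / (β + γ)) := by
  have hθ : 0 < γ / (β + γ) := by positivity
  have hs : 0 < β / (β + γ) := by positivity
  rcases eq_or_ne A ⊤ with rfl | hA'
  · simp [ENNReal.top_rpow_of_pos hθ, ENNReal.mul_top, hB, hs.le.not_gt]
  rcases eq_or_ne B ⊤ with rfl | hB'
  · simp [ENNReal.top_rpow_of_pos hs, ENNReal.mul_top, hA, hθ.le.not_gt]
  obtain ⟨a, ha, rfl⟩ : ∃ a : ℝ, 0 < a ∧ ENNReal.ofReal a = A :=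
    ⟨A.toReal, ENNReal.toReal_pos hA hA', ENNReal.ofReal_toReal hA'⟩
  obtain ⟨b, hb, rfl⟩ : ∃ b : ℝ, 0 < b ∧ ENNReal.ofReal b = B :=
    ⟨B.toReal, ENNReal.toReal_pos hB hB', ENNReal.ofReal_toReal hB'⟩
  -- the radius at which the two terms balance: `t ^ (β + γ) = b / a`
  set t := (b / a) ^ (β + γ)⁻¹ with ht_def
  have ht : 0 < t := by positivity
  have hsum : γ / (β + γ) + β / (β + γ) = 1 := by field_simp; ring
  have hbal₁ : a * t ^ β = a ^ (γ / (β + γ)) * b ^ (β / (β + γ)) := by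
    rw [ht_def, ← Real.rpow_mul (div_pos hb ha).le, show (β + γ)⁻¹ * β = β / (β + γ) by ring,
      Real.div_rpow hb.le ha.le]
    nth_rw 1 [← Real.rpow_one a, ← hsum, Real.rpow_add ha]
    field_simp
  have hbal₂ : b * t ^ (-γ) = a ^ (γ / (β + γ)) * b ^ (β / (β + γ)) := by
    rw [ht_def, ← Real.rpow_mul (div_pos hb ha).le, show (β + γ)⁻¹ * -γ = -(γ / (β + γ)) by ring,
      Real.rpow_neg (div_pos hb ha).le, Real.div_rpow hb.le ha.le]
    nth_rw 1 [← Real.rpow_one b, ← hsum, Real.rpow_add hb]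
    field_simp
  calc X ≤ ENNReal.ofReal (a * t ^ β) + ENNReal.ofReal (b * t ^ (-γ)) := by
        simpa only [ENNReal.ofReal_mul ha.le, ENNReal.ofReal_mul hb.le,
          ENNReal.ofReal_rpow_of_pos ht] using h t ht
    _ = 2 * ENNReal.ofReal a ^ (γ / (β + γ)) * ENNReal.ofReal b ^ (β / (β + γ)) := by
        rw [hbal₁, hbal₂, ← two_mul, ENNReal.ofReal_mul (by positivity), mul_assoc,
          ENNReal.ofReal_rpow_of_pos ha, ENNReal.ofReal_rpow_of_pos hb]

section
variable {X : Type*} [MeasurableSpace X] {μ : Measure X}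

theorem setLIntegral_le_lintegral_rpow_mul_measure_rpow {p : ℝ} (hp : 1 < p) {h : X → ℝ≥0∞}
    (hm : AEMeasurable h μ) (s : Set X) :
    ∫⁻ x in s, h x ∂μ ≤ (∫⁻ x, h x ^ p ∂μ) ^ p⁻¹ * μ s ^ (1 - p⁻¹) := by
  have hpq : p.HolderConjugate p.conjExponent := .conjExponent hp
  calc ∫⁻ x in s, h x ∂μ = ∫⁻ x in s, (h * 1) x ∂μ := by simp
    _ ≤ (∫⁻ x in s, h x ^ p ∂μ) ^ (1 / p) *
          (∫⁻ x in s, 1 ^ p.conjExponent ∂μ) ^ (1 / p.conjExponent) :=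
        ENNReal.lintegral_mul_le_Lp_mul_Lq _ hpq hm.restrict aemeasurable_const
    _ ≤ (∫⁻ x, h x ^ p ∂μ) ^ p⁻¹ * μ s ^ (1 - p⁻¹) := by
        rw [one_div, one_div, ← hpq.one_sub_inv]
        simp only [ENNReal.one_rpow, lintegral_const, Measure.restrict_apply_univ, one_mul]
        gcongr
        exact Measure.restrict_le_self

theorem lintegral_rpow_mul_rpow_rpow_le {G K : X → ℝ≥0∞} (hG : AEMeasurable G μ)
    (hK : AEMeasurable K μ) {θ s r : ℝ} (hθ : 0 < θ) (hs : 0 < s) (hr : r⁻¹ = θ + s) :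
    (∫⁻ x, (G x ^ θ * K x ^ s) ^ r ∂μ) ^ r⁻¹ ≤ (∫⁻ x, G x ∂μ) ^ θ * (∫⁻ x, K x ∂μ) ^ s := by
  have hr₀ : 0 < r := inv_pos.1 (hr ▸ by positivity)
  have hrθ : r < θ⁻¹ := by
    rw [← inv_lt_inv₀ (by positivity) hr₀, hr, inv_inv]
    linarith
  have := ENNReal.lintegral_Lp_mul_le_Lq_mul_Lr (r := s⁻¹) hr₀ hrθ
    (by simp only [one_div, hr, inv_inv]) μ (hG.pow_const θ) (hK.pow_const s)
  simpa [← ENNReal.rpow_mul, hθ.ne', hs.ne'] using this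

theorem lintegral_const_mul_rpow_rpow_inv {g : X → ℝ≥0∞} (hg : AEMeasurable g μ) {r : ℝ}
    (hr : 0 < r) (c : ℝ≥0∞) :
    (∫⁻ x, (c * g x) ^ r ∂μ) ^ r⁻¹ = c * (∫⁻ x, g x ^ r ∂μ) ^ r⁻¹ := by
  simp_rw [ENNReal.mul_rpow_of_nonneg c _ hr.le]
  rw [lintegral_const_mul'' _ (hg.pow_const r), ENNReal.mul_rpow_of_nonneg _ _ (by positivity),
    ENNReal.rpow_rpow_inv hr.ne']
end

theorem setLIntegral_compl_ball_le_rpow_neg_mul_moment {E : Type*} [SeminormedAddCommGroup E]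
    [MeasurableSpace E] [OpensMeasurableSpace E] (μ : Measure E) {γ t : ℝ} (hγ : 0 < γ)
    (ht : 0 < t) (h : E → ℝ≥0∞) :
    ∫⁻ p in (ball 0 t)ᶜ, h p ∂μ ≤ ENNReal.ofReal t ^ (-γ) * ∫⁻ p, ‖p‖ₑ ^ γ * h p ∂μ := by
  have htγ : ENNReal.ofReal t ^ γ ≠ 0 := by simp [ENNReal.rpow_eq_zero_iff, ht, hγ]
  have htγ' : ENNReal.ofReal t ^ γ ≠ ⊤ := by simp [ENNReal.rpow_eq_top_iff, hγ.le.not_gt]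
  have hpt : ∀ p ∈ (ball (0 : E) t)ᶜ, h p ≤ ENNReal.ofReal t ^ (-γ) * (‖p‖ₑ ^ γ * h p) := by
    intro p hp
    have hnorm : ENNReal.ofReal t ≤ ‖p‖ₑ := by
      rw [← ofReal_norm]
      exact ENNReal.ofReal_le_ofReal (by simpa using hp)
    calc h p = (ENNReal.ofReal t ^ γ)⁻¹ * ENNReal.ofReal t ^ γ * h p := by
          rw [ENNReal.inv_mul_cancel htγ htγ', one_mul]
      _ ≤ ENNReal.ofReal t ^ (-γ) * (‖p‖ₑ ^ γ * h p) := by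
          rw [ENNReal.rpow_neg, mul_assoc]
          gcongr
  calc ∫⁻ p in (ball 0 t)ᶜ, h p ∂μ
      ≤ ∫⁻ p in (ball 0 t)ᶜ, ENNReal.ofReal t ^ (-γ) * (‖p‖ₑ ^ γ * h p) ∂μ :=
        setLIntegral_mono' measurableSet_ball.compl hpt
    _ ≤ ∫⁻ p, ENNReal.ofReal t ^ (-γ) * (‖p‖ₑ ^ γ * h p) ∂μ := setLIntegral_le_lintegral _ _
    _ = ENNReal.ofReal t ^ (-γ) * ∫⁻ p, ‖p‖ₑ ^ γ * h p ∂μ := by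
        rw [lintegral_const_mul' _ _ (by simp [ENNReal.rpow_neg, htγ])]

section
variable {E : Type*} [NormedAddCommGroup E] [NormedSpace ℝ E] [MeasurableSpace E] [BorelSpace E]
  [FiniteDimensional ℝ E] [Nontrivial E] (μ : Measure E) [μ.IsAddHaarMeasure]

theorem lintegral_le_mul_rpow_mul_moment_rpow {α β γ : ℝ} (hα : 1 < α) (hγ : 0 < γ)
    (hβ : β = finrank ℝ E * (1 - α⁻¹)) {h : E → ℝ≥0∞} (hm : AEMeasurable h μ) :
    ∫⁻ p, h p ∂μ ≤ 2 * (μ (ball 0 1) ^ (1 - α⁻¹) * (∫⁻ p, h p ^ α ∂μ) ^ α⁻¹) ^ (γ / (β + γ)) *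
      (∫⁻ p, ‖p‖ₑ ^ γ * h p ∂μ) ^ (β / (β + γ)) := by
  have hα' : 0 < 1 - α⁻¹ := sub_pos.2 (inv_lt_one_of_one_lt₀ hα)
  have hβpos : 0 < β := hβ ▸ mul_pos (Nat.cast_pos.2 finrank_pos) hα'
  rcases eq_or_ne (∫⁻ p, h p ∂μ) 0 with h0 | h0
  · simp [h0]
  have hh : ¬ h =ᵐ[μ] 0 := fun hz => h0 ((lintegral_eq_zero_iff' hm).2 hz)
  have hG : ∫⁻ p, h p ^ α ∂μ ≠ 0 := by
    rw [Ne, lintegral_eq_zero_iff' (hm.pow_const α)]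
    refine fun hz => hh ?_
    filter_upwards [hz] with p hp
    exact (ENNReal.rpow_eq_zero_iff_of_pos (zero_lt_one.trans hα)).1 hp
  have hK : ∫⁻ p, ‖p‖ₑ ^ γ * h p ∂μ ≠ 0 := by
    rw [Ne, lintegral_eq_zero_iff' (by fun_prop)]
    refine fun hz => hh ?_
    filter_upwards [hz, μ.ae_ne 0] with p hp hp0
    simpa [hp0, ENNReal.rpow_eq_zero_iff, hγ] using hp
  have hA : μ (ball 0 1) ^ (1 - α⁻¹) * (∫⁻ p, h p ^ α ∂μ) ^ α⁻¹ ≠ 0 := by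
    simp [ENNReal.rpow_eq_zero_iff, hG, (measure_ball_pos μ 0 one_pos).ne', measure_ball_lt_top.ne,
      (zero_lt_one.trans hα).le]
  refine ENNReal.le_two_mul_rpow_mul_rpow_of_forall_le hβpos hγ hA hK fun t ht => ?_
  have hvol : μ (ball 0 t) ^ (1 - α⁻¹) = ENNReal.ofReal t ^ β * μ (ball 0 1) ^ (1 - α⁻¹) := by
    rw [Measure.addHaar_ball_of_pos μ 0 ht, ENNReal.mul_rpow_of_nonneg _ _ hα'.le,
      ENNReal.ofReal_pow ht.le, ← ENNReal.rpow_natCast, ← ENNReal.rpow_mul, hβ]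
  calc ∫⁻ p, h p ∂μ = ∫⁻ p in ball 0 t, h p ∂μ + ∫⁻ p in (ball 0 t)ᶜ, h p ∂μ :=
        (lintegral_add_compl _ measurableSet_ball).symm
    _ ≤ (∫⁻ p, h p ^ α ∂μ) ^ α⁻¹ * μ (ball 0 t) ^ (1 - α⁻¹) +
        ENNReal.ofReal t ^ (-γ) * ∫⁻ p, ‖p‖ₑ ^ γ * h p ∂μ :=
        add_le_add (setLIntegral_le_lintegral_rpow_mul_measure_rpow hα hm _)
          (setLIntegral_compl_ball_le_rpow_neg_mul_moment μ hγ ht h)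
    _ = _ := by rw [hvol]; ring

theorem eLpNorm_lintegral_prod_right_le {X : Type*} [MeasurableSpace X] (ν : Measure X)
    [SFinite ν] {α β γ θ s r : ℝ} (hα : 1 < α) (hγ : 0 < γ) (hβ : β = finrank ℝ E * (1 - α⁻¹))
    (hθ : θ = γ / (β + γ)) (hs : s = β / (β + γ)) (hr : r⁻¹ = θ / α + s)
    {F : X × E → ℝ≥0∞} (hF : Measurable F) :
    eLpNorm (fun x => ∫⁻ p, F (x, p) ∂μ) (ENNReal.ofReal r) ν ≤
      2 * μ (ball 0 1) ^ ((1 - α⁻¹) * θ) * eLpNorm F (ENNReal.ofReal α) (ν.prod μ) ^ θ *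
        (∫⁻ z, ‖z.2‖ₑ ^ γ * F z ∂(ν.prod μ)) ^ s := by
  have hα₀ : 0 < α := zero_lt_one.trans hα
  have hβ₀ : 0 < β :=
    hβ ▸ mul_pos (Nat.cast_pos.2 finrank_pos) (sub_pos.2 (inv_lt_one_of_one_lt₀ hα))
  have hθ₀ : 0 < θ := hθ ▸ by positivity
  have hs₀ : 0 < s := hs ▸ by positivity
  have hr₀ : 0 < r := inv_pos.1 (hr ▸ by positivity)
  set c := 2 * μ (ball 0 1) ^ ((1 - α⁻¹) * θ)
  have hpt : ∀ x, ∫⁻ p, F (x, p) ∂μ ≤ c * ((∫⁻ p, F (x, p) ^ α ∂μ) ^ (θ / α) *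
      (∫⁻ p, ‖p‖ₑ ^ γ * F (x, p) ∂μ) ^ s) := fun x => by
    refine (lintegral_le_mul_rpow_mul_moment_rpow μ hα hγ hβ (h := fun p => F (x, p))
      (by fun_prop)).trans_eq ?_
    rw [← hθ, ← hs, ENNReal.mul_rpow_of_nonneg _ _ hθ₀.le, ← ENNReal.rpow_mul, ← ENNReal.rpow_mul,
      inv_mul_eq_div]
    ring
  have hFα : eLpNorm F (ENNReal.ofReal α) (ν.prod μ) = (∫⁻ x, ∫⁻ p, F (x, p) ^ α ∂μ ∂ν) ^ α⁻¹ := by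
    rw [eLpNorm_eq_lintegral_rpow_enorm_toReal (by simpa) (by simp), ENNReal.toReal_ofReal hα₀.le,
      one_div, ← lintegral_prod _ (hF.pow_const α).aemeasurable]
    rfl
  rw [eLpNorm_eq_lintegral_rpow_enorm_toReal (by simpa) (by simp), ENNReal.toReal_ofReal hr₀.le,
    one_div, hFα, lintegral_prod _ (by fun_prop), ← ENNReal.rpow_mul, inv_mul_eq_div]
  calc (∫⁻ x, ‖∫⁻ p, F (x, p) ∂μ‖ₑ ^ r ∂ν) ^ r⁻¹
      ≤ (∫⁻ x, (c * ((∫⁻ p, F (x, p) ^ α ∂μ) ^ (θ / α) *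
          (∫⁻ p, ‖p‖ₑ ^ γ * F (x, p) ∂μ) ^ s)) ^ r ∂ν) ^ r⁻¹ := by
        gcongr with x
        exact hpt x
    _ = c * (∫⁻ x, ((∫⁻ p, F (x, p) ^ α ∂μ) ^ (θ / α) *
          (∫⁻ p, ‖p‖ₑ ^ γ * F (x, p) ∂μ) ^ s) ^ r ∂ν) ^ r⁻¹ :=
        lintegral_const_mul_rpow_rpow_inv (by fun_prop) hr₀ c
    _ ≤ c * ((∫⁻ x, ∫⁻ p, F (x, p) ^ α ∂μ ∂ν) ^ (θ / α) *
          (∫⁻ x, ∫⁻ p, ‖p‖ₑ ^ γ * F (x, p) ∂μ ∂ν) ^ s) := by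
        gcongr
        exact lintegral_rpow_mul_rpow_rpow_le (by fun_prop) (by fun_prop) (by positivity) hs₀ hr
    _ = _ := (mul_assoc _ _ _).symm
end

theorem enorm_rhoOf_le (f : E3 × E3 → ℝ) (x : E3) : ‖rhoOf f x‖ₑ ≤ ∫⁻ p, ‖f (x, p)‖ₑ :=
  enorm_integral_le_lintegral_enorm _

theorem eLpNorm_rhoOf_one_le {f : E3 × E3 → ℝ} (hf : AEStronglyMeasurable f volume) :
    eLpNorm (rhoOf f) 1 volume ≤ eLpNorm f 1 volume := by
  simp only [eLpNorm_one_eq_lintegral_enorm]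
  calc ∫⁻ x, ‖rhoOf f x‖ₑ ≤ ∫⁻ x, ∫⁻ p, ‖f (x, p)‖ₑ := lintegral_mono (enorm_rhoOf_le f)
    _ = ∫⁻ z, ‖f z‖ₑ := (lintegral_prod _ hf.enorm).symm

theorem lintegral_sq_enorm_mul_eq_ofReal_integral {f : E3 × E3 → ℝ} (hf : ∀ z, 0 ≤ f z)
    (hint : Integrable (fun z : E3 × E3 => ‖z.2‖ ^ 2 * f z)) :
    ∫⁻ z, ‖z.2‖ₑ ^ (2 : ℝ) * ‖f z‖ₑ = ENNReal.ofReal (∫ z : E3 × E3, ‖z.2‖ ^ 2 * f z) := by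
  rw [ofReal_integral_eq_lintegral_ofReal hint
    (.of_forall fun z => mul_nonneg (by positivity) (hf z))]
  refine lintegral_congr fun z => ?_
  rw [ENNReal.ofReal_mul (by positivity), ENNReal.ofReal_pow (norm_nonneg _), ofReal_norm,
    Real.enorm_eq_ofReal (hf z), ENNReal.rpow_two]

theorem eLpNorm_rhoOf_le {α : ℝ} (hα : 1 < α) {f : E3 × E3 → ℝ} (hf : Measurable f) :
    eLpNorm (rhoOf f) (ENNReal.ofReal ((5 * α - 3) / (3 * α - 1))) volume ≤
      2 * volume (ball (0 : E3) 1) ^ ((1 - α⁻¹) * (2 * α / (5 * α - 3))) *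
        eLpNorm f (ENNReal.ofReal α) volume ^ (2 * α / (5 * α - 3)) *
        (∫⁻ z : E3 × E3, ‖z.2‖ₑ ^ (2 : ℝ) * ‖f z‖ₑ) ^ (3 * (α - 1) / (5 * α - 3)) := by
  have hα₀ : α ≠ 0 := by positivity
  have h₅ : 5 * α - 3 ≠ 0 := by linarith
  have hden : 3 * (1 - α⁻¹) + 2 = (5 * α - 3) / α := by
    field_simp
    ring
  have hθ : 2 * α / (5 * α - 3) = 2 / (3 * (1 - α⁻¹) + 2) := by
    rw [hden]
    field_simp
  have hs : 3 * (α - 1) / (5 * α - 3) = 3 * (1 - α⁻¹) / (3 * (1 - α⁻¹) + 2) := by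
    rw [hden]
    field_simp
  have hr : ((5 * α - 3) / (3 * α - 1))⁻¹ =
      2 * α / (5 * α - 3) / α + 3 * (α - 1) / (5 * α - 3) := by
    field_simp
    ring
  rw [← eLpNorm_enorm f, Measure.volume_eq_prod]
  exact (eLpNorm_mono_enorm fun x => by simpa using enorm_rhoOf_le f x).trans
    (eLpNorm_lintegral_prod_right_le volume volume (F := fun z => ‖f z‖ₑ) hα two_pos (by simp)
      hθ hs hr (by fun_prop))

/-- Interpolation estimate: for `1 ≤ α < ∞` there is `C = C(α) > 0` such that for every
nonnegative measurable `f ∈ L^α(ℝ⁶)` with finite kinetic integral `∫∫ |p|² f < ∞`,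
`‖ρ_f‖_{L^{(5α-3)/(3α-1)}} ≤ C ‖f‖_{L^α}^{2α/(5α-3)} (∫∫ |p|² f)^{3(α-1)/(5α-3)}`. -/
theorem interpolation_estimate (α : ℝ) (hα : 1 ≤ α) :
    ∃ C > (0 : ℝ), ∀ f : E3 × E3 → ℝ, Measurable f → (∀ z, 0 ≤ f z) →
      MemLp f (ENNReal.ofReal α) →
      Integrable (fun z : E3 × E3 => ‖z.2‖ ^ 2 * f z) →
      eLpNorm (rhoOf f) (ENNReal.ofReal ((5 * α - 3) / (3 * α - 1))) volume ≤
        ENNReal.ofReal (C * (eLpNorm f (ENNReal.ofReal α) volume).toReal ^ (2 * α / (5 * α - 3)) *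
          (∫ z : E3 × E3, ‖z.2‖ ^ 2 * f z) ^ (3 * (α - 1) / (5 * α - 3))) := by
  rcases hα.eq_or_lt with rfl | hα
  · refine ⟨1, one_pos, fun f _ _ hmem _ => ?_⟩
    norm_num at hmem ⊢
    rw [ENNReal.ofReal_toReal hmem.eLpNorm_ne_top]
    exact eLpNorm_rhoOf_one_le hmem.1
  set c := 2 * volume (ball (0 : E3) 1) ^ ((1 - α⁻¹) * (2 * α / (5 * α - 3)))
  have hB₀ : 0 < volume (ball (0 : E3) 1) := measure_ball_pos _ _ one_pos
  have hc₀ : c ≠ 0 := mul_ne_zero two_ne_zero (ENNReal.rpow_pos hB₀ measure_ball_lt_top.ne).ne'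
  have hc : c ≠ ⊤ :=
    ENNReal.mul_ne_top (by simp) (ENNReal.rpow_ne_top_of_nonneg' hB₀ measure_ball_lt_top.ne)
  refine ⟨c.toReal, ENNReal.toReal_pos hc₀ hc, fun f hfm hf hmem hint => ?_⟩
  have hθ : 0 ≤ 2 * α / (5 * α - 3) := div_nonneg (by linarith) (by linarith)
  have hs : 0 ≤ 3 * (α - 1) / (5 * α - 3) := div_nonneg (by linarith) (by linarith)
  have hT : 0 ≤ ∫ z : E3 × E3, ‖z.2‖ ^ 2 * f z :=
    integral_nonneg fun z => mul_nonneg (by positivity) (hf z)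
  refine (eLpNorm_rhoOf_le hα hfm).trans_eq ?_
  rw [lintegral_sq_enorm_mul_eq_ofReal_integral hf hint, ENNReal.ofReal_mul (by positivity),
    ENNReal.ofReal_mul ENNReal.toReal_nonneg, ENNReal.ofReal_toReal hc,
    ← ENNReal.ofReal_rpow_of_nonneg ENNReal.toReal_nonneg hθ,
    ENNReal.ofReal_toReal hmem.eLpNorm_ne_top, ← ENNReal.ofReal_rpow_of_nonneg hT hs]

end
end

section
/- (Endpoint interpolation estimate, α = ∞.) There exists a constant C > 0 such that for every measurable f : ℝ³×ℝ³ → [0,∞) with f ∈ L^∞(ℝ⁶) and ∫∫_{ℝ⁶} |p|² f(q,p) dq dp < ∞, the spatial density satisfies ‖ρ_f‖_{L^{5/3}(ℝ³)} ≤ C ‖f‖_{L^∞(ℝ⁶)}^{2/5} · ( ∫∫_{ℝ⁶} |p|² f(q,p) dq dp )^{3/5}. -/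
open MeasureTheory Real

noncomputable section

/-! Split the momentum integral at `|p| = R`: inside the ball, `f ≤ ‖f‖_∞` contributes at most
`‖f‖_∞ |B_1| R^d`; outside, `1 ≤ |p|² / R²` bounds the rest by `R⁻² K(x)`, where
`K(x) = ∫ |p|² f(x,p) dp`. Choosing `R = (K(x) / (|B_1| ‖f‖_∞))^{1/(d+2)}` gives
`ρ_f(x) ≤ 2 (|B_1| ‖f‖_∞)^{2/(d+2)} K(x)^{d/(d+2)}`; raise this to the power `(d+2)/d` and
integrate in `x`. Here `d = 3`. -/

open ENNReal Metric Filter Topology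

theorem exists_mul_pow_add_div_sq_eq (d : ℕ) {a k : ℝ} (ha : 0 < a) (hk : 0 < k) :
    ∃ R > 0, a * R ^ d + k / R ^ 2 = 2 * a ^ (2 / (d + 2 : ℝ)) * k ^ (d / (d + 2 : ℝ)) := by
  have hpow (n : ℕ) : ((k / a) ^ (1 / (d + 2 : ℝ))) ^ n =
      k ^ (n / (d + 2 : ℝ)) / a ^ (n / (d + 2 : ℝ)) := by
    rw [← Real.rpow_natCast, ← Real.rpow_mul (by positivity), Real.div_rpow hk.le ha.le]
    congr 2 <;> ring
  have hsplit {x : ℝ} (hx : 0 < x) : x = x ^ (2 / (d + 2 : ℝ)) * x ^ (d / (d + 2 : ℝ)) := by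
    rw [← Real.rpow_add hx, ← add_div, add_comm, div_self (by positivity), Real.rpow_one]
  refine ⟨(k / a) ^ (1 / (d + 2 : ℝ)), by positivity, ?_⟩
  rw [hpow, hpow]
  nth_rewrite 1 [hsplit ha]
  nth_rewrite 2 [hsplit hk]
  push_cast
  field_simp
  ring

theorem le_two_mul_rpow_mul_rpow_of_forall_le_add {d : ℕ} {a k L : ℝ} (ha : 0 ≤ a) (hk : 0 ≤ k)
    (h : ∀ R > 0, L ≤ a * R ^ d + k / R ^ 2) :
    L ≤ 2 * a ^ (2 / (d + 2 : ℝ)) * k ^ (d / (d + 2 : ℝ)) := by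
  -- Perturbing `a` and `k` makes both positive, so that an optimal radius exists.
  set F : ℝ → ℝ := fun ε => 2 * (a + ε) ^ (2 / (d + 2 : ℝ)) * (k + ε) ^ (d / (d + 2 : ℝ))
  have hF : ContinuousWithinAt F (Set.Ioi 0) 0 := by
    apply Continuous.continuousWithinAt
    have h1 := Real.continuous_rpow_const (q := 2 / (d + 2 : ℝ)) (by positivity)
    have h2 := Real.continuous_rpow_const (q := d / (d + 2 : ℝ)) (by positivity)
    fun_prop
  have hε : ∀ ε > 0, L ≤ F ε := fun ε hε => by
    obtain ⟨R, hR, hR_eq⟩ :=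
      exists_mul_pow_add_div_sq_eq d (by linarith : 0 < a + ε) (by linarith : 0 < k + ε)
    calc L ≤ a * R ^ d + k / R ^ 2 := h R hR
      _ ≤ (a + ε) * R ^ d + (k + ε) / R ^ 2 := by gcongr <;> linarith
      _ = F ε := hR_eq
  simpa [F] using ge_of_tendsto hF (eventually_nhdsWithin_of_forall hε)

section MomentumSpace

variable {E : Type*} [NormedAddCommGroup E] [MeasurableSpace E] {μ : Measure E}

theorem lintegral_le_mul_measure_ball_add_div [OpensMeasurableSpace E] {g : E → ℝ≥0∞}
    {A : ℝ≥0∞} (hg : ∀ᵐ p ∂μ, g p ≤ A) {R : ℝ} (hR : 0 < R) :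
    ∫⁻ p, g p ∂μ ≤ A * μ (ball 0 R) + (∫⁻ p, ‖p‖ₑ ^ 2 * g p ∂μ) / ENNReal.ofReal R ^ 2 := by
  rw [← lintegral_add_compl g measurableSet_ball]
  gcongr
  · calc ∫⁻ p in ball 0 R, g p ∂μ ≤ ∫⁻ _ in ball 0 R, A ∂μ :=
          lintegral_mono_ae (ae_restrict_of_ae hg)
      _ = A * μ (ball 0 R) := setLIntegral_const _ _
  · have hR2 : ENNReal.ofReal R ^ 2 ≠ 0 := by simpa using hR
    calc ∫⁻ p in (ball 0 R)ᶜ, g p ∂μ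
        ≤ ∫⁻ p in (ball 0 R)ᶜ, ‖p‖ₑ ^ 2 * g p / ENNReal.ofReal R ^ 2 ∂μ := by
          refine setLIntegral_mono' measurableSet_ball.compl fun p hp => ?_
          rw [ENNReal.le_div_iff_mul_le (.inl hR2) (.inl (by simp)), mul_comm]
          have : ENNReal.ofReal R ≤ ‖p‖ₑ := by
            rw [← ofReal_norm]
            exact ENNReal.ofReal_le_ofReal (by simpa using hp)
          gcongr
      _ ≤ ∫⁻ p, ‖p‖ₑ ^ 2 * g p / ENNReal.ofReal R ^ 2 ∂μ := setLIntegral_le_lintegral _ _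
      _ = (∫⁻ p, ‖p‖ₑ ^ 2 * g p ∂μ) / ENNReal.ofReal R ^ 2 := by
          simp_rw [div_eq_mul_inv]
          exact lintegral_mul_const' _ _ (ENNReal.inv_ne_top.2 hR2)

variable [NormedSpace ℝ E] [FiniteDimensional ℝ E] [BorelSpace E] [μ.IsAddHaarMeasure]

theorem lintegral_le_two_mul_rpow_mul_rpow {g : E → ℝ≥0∞} {A : ℝ≥0∞} (hA : A ≠ ⊤)
    (hg : ∀ᵐ p ∂μ, g p ≤ A) (hK : ∫⁻ p, ‖p‖ₑ ^ 2 * g p ∂μ ≠ ⊤) :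
    ∫⁻ p, g p ∂μ ≤ 2 * (μ (ball 0 1) * A) ^ (2 / (Module.finrank ℝ E + 2 : ℝ)) *
      (∫⁻ p, ‖p‖ₑ ^ 2 * g p ∂μ) ^ (Module.finrank ℝ E / (Module.finrank ℝ E + 2 : ℝ)) := by
  set K := ∫⁻ p, ‖p‖ₑ ^ 2 * g p ∂μ
  have hcA : μ (ball 0 1) * A ≠ ⊤ := ENNReal.mul_ne_top measure_ball_lt_top.ne hA
  have hR_bound (R : ℝ) (hR : 0 < R) : ∫⁻ p, g p ∂μ ≤
      ENNReal.ofReal ((μ (ball 0 1) * A).toReal * R ^ Module.finrank ℝ E + K.toReal / R ^ 2) := by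
    refine (lintegral_le_mul_measure_ball_add_div hg hR).trans_eq ?_
    rw [Measure.addHaar_ball_of_pos μ 0 hR, ENNReal.ofReal_add (by positivity) (by positivity),
      ENNReal.ofReal_mul ENNReal.toReal_nonneg, ENNReal.ofReal_toReal hcA,
      ENNReal.ofReal_div_of_pos (by positivity), ENNReal.ofReal_toReal hK]
    simp only [K, ENNReal.ofReal_pow hR.le]
    ring
  have hL : ∫⁻ p, g p ∂μ ≠ ⊤ := ne_top_of_le_ne_top ENNReal.ofReal_ne_top (hR_bound 1 one_pos)
  have hreal : (∫⁻ p, g p ∂μ).toReal ≤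
      2 * (μ (ball 0 1) * A).toReal ^ (2 / (Module.finrank ℝ E + 2 : ℝ)) *
        K.toReal ^ (Module.finrank ℝ E / (Module.finrank ℝ E + 2 : ℝ)) :=
    le_two_mul_rpow_mul_rpow_of_forall_le_add ENNReal.toReal_nonneg ENNReal.toReal_nonneg
      fun R hR => ENNReal.toReal_le_of_le_ofReal (by positivity) (hR_bound R hR)
  calc ∫⁻ p, g p ∂μ = ENNReal.ofReal (∫⁻ p, g p ∂μ).toReal := (ENNReal.ofReal_toReal hL).symm
    _ ≤ _ := ENNReal.ofReal_le_ofReal hreal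
    _ = _ := by
      rw [ENNReal.ofReal_mul (by positivity), ENNReal.ofReal_mul zero_le_two,
        ← ENNReal.ofReal_rpow_of_nonneg ENNReal.toReal_nonneg (by positivity),
        ← ENNReal.ofReal_rpow_of_nonneg ENNReal.toReal_nonneg (by positivity),
        ENNReal.ofReal_toReal hcA, ENNReal.ofReal_toReal hK, ENNReal.ofReal_ofNat]

end MomentumSpace

theorem eLpNorm_toReal_lintegral_le {X E : Type*} [MeasurableSpace X] {ν : Measure X}
    [SFinite ν]
    [NormedAddCommGroup E] [NormedSpace ℝ E] [FiniteDimensional ℝ E] [Nontrivial E]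
    [MeasurableSpace E] [BorelSpace E] {μ : Measure E} [μ.IsAddHaarMeasure]
    {G : X × E → ℝ≥0∞} (hG : Measurable G) {A : ℝ≥0∞} (hA : A ≠ ⊤)
    (hGA : ∀ᵐ z ∂ν.prod μ, G z ≤ A) (hK : ∫⁻ z, ‖z.2‖ₑ ^ 2 * G z ∂ν.prod μ ≠ ⊤) :
    eLpNorm (fun x => (∫⁻ p, G (x, p) ∂μ).toReal)
        (ENNReal.ofReal ((Module.finrank ℝ E + 2) / Module.finrank ℝ E)) ν ≤
      2 * (μ (ball 0 1) * A) ^ (2 / (Module.finrank ℝ E + 2 : ℝ)) *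
        (∫⁻ z, ‖z.2‖ₑ ^ 2 * G z ∂ν.prod μ) ^
          (Module.finrank ℝ E / (Module.finrank ℝ E + 2 : ℝ)) := by
  set d : ℝ := (Module.finrank ℝ E : ℝ)
  have hd : 0 < d := by simpa [d] using Module.finrank_pos (R := ℝ) (M := E)
  set q : ℝ := (d + 2) / d
  have hq : 0 < q := by positivity
  set C := 2 * (μ (ball 0 1) * A) ^ (2 / (d + 2))
  have hC : C ≠ ⊤ := by
    have : μ (ball 0 1) * A ≠ ⊤ := ENNReal.mul_ne_top measure_ball_lt_top.ne hA
    exact ENNReal.mul_ne_top ENNReal.ofNat_ne_top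
      (ENNReal.rpow_ne_top_of_nonneg (by positivity) this)
  set K : X → ℝ≥0∞ := fun x => ∫⁻ p, ‖p‖ₑ ^ 2 * G (x, p) ∂μ
  have hkin : Measurable fun z : X × E => ‖z.2‖ₑ ^ 2 * G z := by fun_prop
  have hK_int : ∫⁻ x, K x ∂ν = ∫⁻ z, ‖z.2‖ₑ ^ 2 * G z ∂ν.prod μ :=
    (lintegral_prod _ hkin.aemeasurable).symm
  have hK_fin : ∀ᵐ x ∂ν, K x < ⊤ :=
    ae_lt_top hkin.lintegral_prod_right' (hK_int ▸ hK)
  have hpointwise : ∀ᵐ x ∂ν, ‖(∫⁻ p, G (x, p) ∂μ).toReal‖ₑ ^ q ≤ C ^ q * K x := by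
    filter_upwards [Measure.ae_ae_of_ae_prod hGA, hK_fin] with x hx hKx
    calc ‖(∫⁻ p, G (x, p) ∂μ).toReal‖ₑ ^ q ≤ (∫⁻ p, G (x, p) ∂μ) ^ q := by
          gcongr
          rw [Real.enorm_eq_ofReal ENNReal.toReal_nonneg]
          exact ENNReal.ofReal_toReal_le
      _ ≤ (C * K x ^ (d / (d + 2))) ^ q := by
          gcongr
          exact lintegral_le_two_mul_rpow_mul_rpow hA hx hKx.ne
      _ = C ^ q * K x := by
          rw [ENNReal.mul_rpow_of_nonneg _ _ hq.le, ← ENNReal.rpow_mul,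
            show d / (d + 2) * q = 1 by simp only [q]; field_simp, ENNReal.rpow_one]
  rw [eLpNorm_eq_lintegral_rpow_enorm_toReal (by simp; positivity) ENNReal.ofReal_ne_top,
    ENNReal.toReal_ofReal hq.le, ← hK_int]
  calc (∫⁻ x, ‖(∫⁻ p, G (x, p) ∂μ).toReal‖ₑ ^ q ∂ν) ^ (1 / q)
      ≤ (∫⁻ x, C ^ q * K x ∂ν) ^ (1 / q) :=
          ENNReal.rpow_le_rpow (lintegral_mono_ae hpointwise) (by positivity)
    _ = C * (∫⁻ x, K x ∂ν) ^ (d / (d + 2)) := by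
        rw [lintegral_const_mul' _ _ (ENNReal.rpow_ne_top_of_nonneg hq.le hC),
          ENNReal.mul_rpow_of_nonneg _ _ (by positivity), ← ENNReal.rpow_mul]
        congr 2
        · rw [mul_one_div_cancel hq.ne', ENNReal.rpow_one]
        · simp only [q]; field_simp

/-- Endpoint interpolation estimate (`α = ∞`): there is `C > 0` such that for every
nonnegative measurable `f ∈ L^∞(ℝ⁶)` with finite kinetic integral,
`‖ρ_f‖_{L^{5/3}} ≤ C ‖f‖_{L^∞}^{2/5} (∫∫ |p|² f)^{3/5}`. -/
theorem endpoint_interpolation_estimate :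
    ∃ C > (0 : ℝ), ∀ f : E3 × E3 → ℝ, Measurable f → (∀ z, 0 ≤ f z) →
      MemLp f ⊤ →
      Integrable (fun z : E3 × E3 => ‖z.2‖ ^ 2 * f z) →
      eLpNorm (rhoOf f) (ENNReal.ofReal (5 / 3)) volume ≤
        ENNReal.ofReal (C * (eLpNorm f ⊤ volume).toReal ^ (2 / 5 : ℝ) *
          (∫ z : E3 × E3, ‖z.2‖ ^ 2 * f z) ^ (3 / 5 : ℝ)) := by
  set c := volume (ball (0 : E3) 1)
  refine ⟨2 * c.toReal ^ (2 / 5 : ℝ),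
    mul_pos two_pos (rpow_pos_of_pos (toReal_pos (measure_ball_pos _ _ one_pos).ne'
      measure_ball_lt_top.ne) _), fun f hfm hf0 hf hkin => ?_⟩
  have hρ : rhoOf f = fun x => (∫⁻ p, ENNReal.ofReal (f (x, p))).toReal := funext fun x =>
    integral_eq_lintegral_of_nonneg_ae (.of_forall fun p => hf0 _)
      (hfm.comp measurable_prodMk_left).aestronglyMeasurable
  have hbound : ∀ᵐ z ∂(volume : Measure E3).prod volume,
      ENNReal.ofReal (f z) ≤ eLpNorm f ⊤ volume := by
    filter_upwards [ae_le_eLpNormEssSup (f := f) (μ := volume)] with z hz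
    rwa [← Real.enorm_eq_ofReal (hf0 z), eLpNorm_exponent_top]
  have hkin_nonneg (z : E3 × E3) : 0 ≤ ‖z.2‖ ^ 2 * f z := mul_nonneg (by positivity) (hf0 z)
  have hkin_eq : ∫⁻ z, ‖z.2‖ₑ ^ 2 * ENNReal.ofReal (f z) ∂(volume : Measure E3).prod volume =
      ENNReal.ofReal (∫ z : E3 × E3, ‖z.2‖ ^ 2 * f z) := by
    rw [ofReal_integral_eq_lintegral_ofReal hkin (.of_forall hkin_nonneg)]
    refine lintegral_congr fun z => ?_
    rw [ENNReal.ofReal_mul (by positivity), ENNReal.ofReal_pow (norm_nonneg _), ofReal_norm]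
  have key := eLpNorm_toReal_lintegral_le hfm.ennreal_ofReal hf.eLpNorm_ne_top hbound
    (hkin_eq ▸ ENNReal.ofReal_ne_top)
  rw [hkin_eq, ← hρ, finrank_euclideanSpace_fin,
    show ((3 : ℕ) + 2 : ℝ) / (3 : ℕ) = 5 / 3 by norm_num,
    show (2 : ℝ) / ((3 : ℕ) + 2) = 2 / 5 by norm_num,
    show ((3 : ℕ) : ℝ) / ((3 : ℕ) + 2) = 3 / 5 by norm_num] at key
  refine key.trans_eq ?_
  have hI : 0 ≤ ∫ z : E3 × E3, ‖z.2‖ ^ 2 * f z := integral_nonneg hkin_nonneg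
  rw [ENNReal.ofReal_mul (by positivity), ENNReal.ofReal_mul (by positivity),
    ENNReal.ofReal_mul zero_le_two, ENNReal.ofReal_ofNat,
    ← ENNReal.ofReal_rpow_of_nonneg toReal_nonneg (by norm_num),
    ← ENNReal.ofReal_rpow_of_nonneg toReal_nonneg (by norm_num),
    ← ENNReal.ofReal_rpow_of_nonneg hI (by norm_num),
    ENNReal.ofReal_toReal measure_ball_lt_top.ne, ENNReal.ofReal_toReal hf.eLpNorm_ne_top,
    ENNReal.mul_rpow_of_nonneg _ _ (by norm_num)]
  ring

end
end

section
/- (Classical Cwikel–Lieb–Rozenblum type bound.) Let r ≥ 3/2 and let V ∈ L^r(ℝ³) be real-valued. Then for every E > 0, the Lebesgue measure of the phase-space set {(q,p) ∈ ℝ³×ℝ³ : |p|²/2 + V(q) ≤ −E} is at most (8√2 π/3) · E^{−(r−3/2)} · ∫_{ℝ³} V_−(x)^r dx, where V_−(x) = max{−V(x), 0}. -/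
open MeasureTheory Real

noncomputable section

/-! For fixed `q` the momentum fibre of the phase-space set is the closed ball of radius
`√(2 (V_-(q) - E))`, empty unless `V_-(q) ≥ E`. Its volume `(4π/3) (2 (V_-(q) - E))^{3/2}` is at most
`(8√2 π/3) V_-(q)^{3/2}`, and on `{V_- ≥ E}` we have `V_-^{3/2} ≤ E^{-(r - 3/2)} V_-^r`.
Integrating over `q` (Tonelli) gives the bound. -/

open Metric

lemma setOf_norm_sq_div_two_add_le_eq_closedBall {F : Type*} [SeminormedAddCommGroup F]
    {a b : ℝ} (hab : a ≤ b) :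
    {p : F | ‖p‖ ^ 2 / 2 + a ≤ b} = closedBall 0 √(2 * (b - a)) := by
  ext p
  rw [Set.mem_ofPred_eq, mem_closedBall_zero_iff, Real.le_sqrt (norm_nonneg p) (by linarith)]
  constructor <;> intro hp <;> linarith

lemma setOf_norm_sq_div_two_add_le_eq_empty {F : Type*} [SeminormedAddCommGroup F]
    {a b : ℝ} (hba : b < a) :
    {p : F | ‖p‖ ^ 2 / 2 + a ≤ b} = ∅ :=
  Set.eq_empty_of_forall_notMem fun p (hp : ‖p‖ ^ 2 / 2 + a ≤ b) => by
    have : 0 ≤ ‖p‖ ^ 2 / 2 := by positivity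
    linarith

lemma sqrt_two_mul_pow_three {x : ℝ} (hx : 0 ≤ x) :
    √(2 * x) ^ 3 = 2 * √2 * x ^ (3 / 2 : ℝ) := by
  have h2 : √2 ^ 2 = 2 := sq_sqrt zero_le_two
  have hx' : √x ^ 2 = x := sq_sqrt hx
  rw [sqrt_mul zero_le_two, show (3 / 2 : ℝ) = 1 + 1 / 2 by norm_num, rpow_add' hx (by norm_num),
    rpow_one, ← sqrt_eq_rpow]
  linear_combination (√2 * √x ^ 3) * h2 + (2 * √2 * √x) * hx'

lemma rpow_le_rpow_neg_sub_mul_rpow {E w a r : ℝ} (hE : 0 < E) (hEw : E ≤ w) (har : a ≤ r) :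
    w ^ a ≤ E ^ (-(r - a)) * w ^ r := by
  have hw : 0 < w := hE.trans_le hEw
  calc w ^ a = w ^ (-(r - a)) * w ^ r := by rw [← rpow_add hw]; ring_nf
    _ ≤ E ^ (-(r - a)) * w ^ r :=
      mul_le_mul_of_nonneg_right (rpow_le_rpow_of_nonpos hE hEw (by linarith)) (by positivity)

lemma volume_setOf_norm_sq_div_two_add_le (v : ℝ) {E r : ℝ} (hE : 0 < E) (hr : 3 / 2 ≤ r) :
    volume {p : E3 | ‖p‖ ^ 2 / 2 + v ≤ -E} ≤
      ENNReal.ofReal (8 * √2 * π / 3 * E ^ (-(r - 3 / 2)) * max (-v) 0 ^ r) := by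
  rcases le_or_gt v (-E) with hv | hv
  · have hw : max (-v) 0 = -v := max_eq_left (by linarith)
    have hball : √(2 * (-E - v)) ^ 3 ≤ 2 * √2 * (E ^ (-(r - 3 / 2)) * (-v) ^ r) := by
      rw [sqrt_two_mul_pow_three (by linarith)]
      gcongr
      calc (-E - v) ^ (3 / 2 : ℝ) ≤ (-v) ^ (3 / 2 : ℝ) := by gcongr; linarith
        _ ≤ E ^ (-(r - 3 / 2)) * (-v) ^ r := rpow_le_rpow_neg_sub_mul_rpow hE (by linarith) hr
    rw [setOf_norm_sq_div_two_add_le_eq_closedBall hv, EuclideanSpace.volume_closedBall_fin_three,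
      ← ENNReal.ofReal_pow (sqrt_nonneg _), ← ENNReal.ofReal_mul (by positivity), hw]
    apply ENNReal.ofReal_le_ofReal
    have := mul_le_mul_of_nonneg_right hball (by positivity : 0 ≤ π * 4 / 3)
    linarith
  · simp [setOf_norm_sq_div_two_add_le_eq_empty hv]

lemma MeasureTheory.MemLp.integrable_max_neg_zero_rpow {α : Type*} [MeasurableSpace α]
    {μ : Measure α} {f : α → ℝ} {r : ℝ} (hf : MemLp f (ENNReal.ofReal r) μ) (hr : 0 < r) :
    Integrable (fun x => max (-f x) 0 ^ r) μ := by
  have := hf.neg_part.integrable_norm_rpow (by simpa using hr) ENNReal.ofReal_ne_top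
  simpa [ENNReal.toReal_ofReal hr.le, abs_of_nonneg] using this

/-- Classical Cwikel–Lieb–Rozenblum type bound: for `r ≥ 3/2`, `V ∈ L^r(ℝ³)` and `E > 0`,
the phase-space volume of `{(q,p) : |p|²/2 + V(q) ≤ -E}` is at most
`(8√2 π/3) E^{-(r-3/2)} ∫ V_-^r`. -/
theorem classical_CLR_bound (r : ℝ) (hr : 3 / 2 ≤ r) (V : E3 → ℝ) (hVmeas : Measurable V)
    (hV : MemLp V (ENNReal.ofReal r)) (E : ℝ) (hE : 0 < E) :
    volume {z : E3 × E3 | ‖z.2‖ ^ 2 / 2 + V z.1 ≤ -E} ≤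
      ENNReal.ofReal ((8 * Real.sqrt 2 * π / 3) * E ^ (-(r - 3 / 2)) *
        ∫ x : E3, max (-V x) 0 ^ r) := by
  set c := 8 * √2 * π / 3 * E ^ (-(r - 3 / 2))
  have hmeas : MeasurableSet {z : E3 × E3 | ‖z.2‖ ^ 2 / 2 + V z.1 ≤ -E} :=
    measurableSet_le (by fun_prop) measurable_const
  have hint : Integrable (fun q => c * max (-V q) 0 ^ r) :=
    (hV.integrable_max_neg_zero_rpow (by linarith)).const_mul c
  calc volume {z : E3 × E3 | ‖z.2‖ ^ 2 / 2 + V z.1 ≤ -E}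
      = ∫⁻ q, volume {p : E3 | ‖p‖ ^ 2 / 2 + V q ≤ -E} := by
        rw [Measure.volume_eq_prod, Measure.prod_apply hmeas]; rfl
    _ ≤ ∫⁻ q, ENNReal.ofReal (c * max (-V q) 0 ^ r) :=
        lintegral_mono fun q => volume_setOf_norm_sq_div_two_add_le (V q) hE hr
    _ = ENNReal.ofReal (∫ q, c * max (-V q) 0 ^ r) :=
        (ofReal_integral_eq_lintegral_ofReal hint (ae_of_all _ fun q => by positivity)).symm
    _ = _ := by rw [integral_const_mul]

end
end

section
/- (Measure of classical energy shells.) Let r ≥ 3/2. There exists a constant C = C(r) > 0 such that for every real-valued V ∈ L^r(ℝ³), every E > 0 and every δ ∈ (0, E/2], the Lebesgue measure of the phase-space set {(q,p) ∈ ℝ³×ℝ³ : | |p|²/2 + V(q) + E | ≤ δ} is at most C · δ · E^{−(r−1/2)} · ∫_{ℝ³} V_−(x)^r dx, where V_−(x) = max{−V(x), 0}. -/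
/-!
By Fubini, the phase-space volume is the integral over `q` of the volume of the momentum shell
`{p : | |p|²/2 + a | ≤ δ}` with `a = V(q) + E`. In dimension `n ≥ 2` this shell lies in an annulus
with radii `ρ ≤ R`, `R² - ρ² ≤ 4δ`, so its volume is `O(δ R^(n-2))` with `R = √(2(δ - a))`.
In dimension three this is `O(δ √(V_-(q) - E/2))`: it vanishes unless `V_-(q) ≥ E/2`, and then
`√(V_-(q)) ≤ (E/2)^(1/2 - r) V_-(q)^r`.
-/

open MeasureTheory Real

noncomputable section

open Metric Module

theorem setOf_abs_sq_half_add_le_subset {F : Type*} [SeminormedAddCommGroup F] (a δ : ℝ) :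
    {p : F | |‖p‖ ^ 2 / 2 + a| ≤ δ} ⊆
      closedBall 0 √(2 * (δ - a)) \ ball 0 √(2 * (-a - δ)) := by
  intro p (hp : |‖p‖ ^ 2 / 2 + a| ≤ δ)
  obtain ⟨hlow, hup⟩ := abs_le.mp hp
  refine ⟨?_, ?_⟩
  · rw [mem_closedBall_zero_iff, ← abs_norm]
    exact Real.abs_le_sqrt (by linarith)
  · rw [mem_ball_zero_iff, not_lt, Real.sqrt_le_left (norm_nonneg p)]
    linarith

theorem pow_sub_pow_le_mul_sq_sub_sq {ρ R : ℝ} (hρ : 0 ≤ ρ) (hρR : ρ ≤ R) (n : ℕ) :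
    R ^ (n + 2) - ρ ^ (n + 2) ≤ (n + 2) * R ^ n * (R ^ 2 - ρ ^ 2) := by
  have hR : 0 ≤ R := hρ.trans hρR
  have h := abs_pow_sub_pow_le R ρ (n + 2)
  rw [abs_of_nonneg (sub_nonneg.mpr (pow_le_pow_left₀ hρ hρR _)),
    abs_of_nonneg (sub_nonneg.mpr hρR), abs_of_nonneg hρ, abs_of_nonneg hR, max_eq_left hρR,
    Nat.add_sub_assoc one_le_two] at h
  have : R * (R - ρ) ≤ R ^ 2 - ρ ^ 2 := by nlinarith
  calc R ^ (n + 2) - ρ ^ (n + 2) ≤ (n + 2) * R ^ n * (R * (R - ρ)) :=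
        h.trans_eq (by push_cast; ring)
    _ ≤ (n + 2) * R ^ n * (R ^ 2 - ρ ^ 2) := by gcongr

section AddHaar

variable {F : Type*} [NormedAddCommGroup F] [NormedSpace ℝ F] [FiniteDimensional ℝ F]
  [MeasurableSpace F] [BorelSpace F] (μ : Measure F) [μ.IsAddHaarMeasure]

theorem addHaar_closedBall_diff_ball [Nontrivial F] (x : F) {ρ R : ℝ} (hρ : 0 ≤ ρ) (hρR : ρ ≤ R) :
    μ (closedBall x R \ ball x ρ) =
      ENNReal.ofReal (R ^ finrank ℝ F - ρ ^ finrank ℝ F) * μ (ball 0 1) := by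
  rw [measure_sdiff (ball_subset_closedBall.trans (closedBall_subset_closedBall hρR))
      measurableSet_ball.nullMeasurableSet measure_ball_lt_top.ne,
    Measure.addHaar_closedBall μ x (hρ.trans hρR), Measure.addHaar_ball μ x hρ,
    ← ENNReal.sub_mul (fun _ _ => measure_ball_lt_top.ne), ENNReal.ofReal_sub _ (by positivity)]

theorem addHaar_setOf_abs_sq_half_add_le (hF : 2 ≤ finrank ℝ F) (a : ℝ) {δ : ℝ} (hδ : 0 ≤ δ) :
    μ {p : F | |‖p‖ ^ 2 / 2 + a| ≤ δ} ≤
      ENNReal.ofReal (4 * finrank ℝ F * δ * √(2 * (δ - a)) ^ (finrank ℝ F - 2)) *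
        μ (ball 0 1) := by
  obtain ⟨n, hn⟩ := Nat.exists_eq_add_of_le' hF
  have : Nontrivial F := Module.nontrivial_of_finrank_pos (R := ℝ) (by omega)
  set R := √(2 * (δ - a))
  set ρ := √(2 * (-a - δ))
  have hρR : ρ ≤ R := Real.sqrt_le_sqrt (by linarith)
  have hsq : R ^ 2 - ρ ^ 2 ≤ 4 * δ := by
    rw [Real.sq_sqrt', Real.sq_sqrt']
    rcases le_total 0 (2 * (δ - a)) with h | h
    · rw [max_eq_left h]; linarith [le_max_left (2 * (-a - δ)) 0]
    · rw [max_eq_right h]; linarith [le_max_right (2 * (-a - δ)) 0]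
  calc μ {p : F | |‖p‖ ^ 2 / 2 + a| ≤ δ} ≤ μ (closedBall 0 R \ ball 0 ρ) :=
        measure_mono (setOf_abs_sq_half_add_le_subset a δ)
    _ = ENNReal.ofReal (R ^ (n + 2) - ρ ^ (n + 2)) * μ (ball 0 1) := by
        rw [addHaar_closedBall_diff_ball μ 0 (Real.sqrt_nonneg _) hρR, hn]
    _ ≤ ENNReal.ofReal (4 * finrank ℝ F * δ * R ^ (finrank ℝ F - 2)) * μ (ball 0 1) := by
        gcongr
        refine (pow_sub_pow_le_mul_sq_sub_sq (Real.sqrt_nonneg _) hρR n).trans ?_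
        rw [hn, Nat.add_sub_cancel]
        calc ((n : ℝ) + 2) * R ^ n * (R ^ 2 - ρ ^ 2) ≤ (n + 2) * R ^ n * (4 * δ) := by gcongr
          _ = _ := by push_cast; ring

end AddHaar

theorem measure_prod_le_ofReal_integral {α β : Type*} [MeasurableSpace α] [MeasurableSpace β]
    {μ : Measure α} {ν : Measure β} [SFinite ν] {s : Set (α × β)} (hs : MeasurableSet s)
    {g : α → ℝ} (hg : Integrable g μ) (hg0 : 0 ≤ᵐ[μ] g)
    (hsec : ∀ᵐ x ∂μ, ν (Prod.mk x ⁻¹' s) ≤ ENNReal.ofReal (g x)) :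
    μ.prod ν s ≤ ENNReal.ofReal (∫ x, g x ∂μ) := by
  rw [Measure.prod_apply hs, ofReal_integral_eq_lintegral_ofReal hg hg0]
  exact lintegral_mono_ae hsec

theorem Real.sqrt_sub_le_rpow_mul_rpow {r t w : ℝ} (hr : 1 / 2 ≤ r) (ht : 0 < t) (hw : 0 ≤ w) :
    √(w - t) ≤ t ^ (1 / 2 - r) * w ^ r := by
  rcases le_or_gt w t with hwt | htw
  · rw [Real.sqrt_eq_zero'.mpr (by linarith)]
    positivity
  calc √(w - t) ≤ √w := Real.sqrt_le_sqrt (sub_le_self w ht.le)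
    _ = w ^ (1 / 2 - r) * w ^ r := by
        rw [Real.sqrt_eq_rpow, ← Real.rpow_add (ht.trans htw)]; ring_nf
    _ ≤ t ^ (1 / 2 - r) * w ^ r :=
        mul_le_mul_of_nonneg_right (Real.rpow_le_rpow_of_nonpos ht htw.le (by linarith))
          (by positivity)

theorem volume_energy_shell_slice_le {r E δ : ℝ} (hr : 1 / 2 ≤ r) (hE : 0 < E) (hδ : 0 ≤ δ)
    (hδE : δ ≤ E / 2) (v : ℝ) :
    volume {p : E3 | |‖p‖ ^ 2 / 2 + v + E| ≤ δ} ≤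
      ENNReal.ofReal (12 * (volume (ball (0 : E3) 1)).toReal * √2 * 2 ^ (r - 1 / 2) * δ *
        E ^ (-(r - 1 / 2)) * max (-v) 0 ^ r) := by
  set c := (volume (ball (0 : E3) 1)).toReal
  have hshell := addHaar_setOf_abs_sq_half_add_le (volume : Measure E3) (by simp) (v + E) hδ
  simp only [finrank_euclideanSpace_fin, ← add_assoc] at hshell
  rw [← ENNReal.ofReal_toReal measure_ball_lt_top.ne, ← ENNReal.ofReal_mul (by positivity)]
    at hshell
  refine hshell.trans (ENNReal.ofReal_le_ofReal ?_)
  have hslice : √(2 * (δ - (v + E))) ≤ √2 * ((E / 2) ^ (1 / 2 - r) * max (-v) 0 ^ r) := by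
    refine le_trans ?_ (mul_le_mul_of_nonneg_left
      (Real.sqrt_sub_le_rpow_mul_rpow hr (by positivity) (le_max_right _ _)) (Real.sqrt_nonneg 2))
    rw [← Real.sqrt_mul zero_le_two]
    exact Real.sqrt_le_sqrt (by linarith [le_max_left (-v) 0])
  have hscale : (E / 2) ^ (1 / 2 - r) = 2 ^ (r - 1 / 2) * E ^ (-(r - 1 / 2)) := by
    rw [Real.div_rpow hE.le zero_le_two, div_eq_mul_inv, ← Real.rpow_neg zero_le_two, mul_comm]
    ring_nf
  calc 4 * (3 : ℕ) * δ * √(2 * (δ - (v + E))) ^ (3 - 2) * c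
      ≤ 12 * δ * (√2 * ((E / 2) ^ (1 / 2 - r) * max (-v) 0 ^ r)) * c := by
        norm_num only [pow_one]
        gcongr
    _ = _ := by rw [hscale]; ring

/-- Measure of classical energy shells: for `r ≥ 3/2` there is `C = C(r) > 0` such that for
every `V ∈ L^r(ℝ³)`, `E > 0` and `δ ∈ (0, E/2]`, the phase-space volume of
`{(q,p) : | |p|²/2 + V(q) + E | ≤ δ}` is at most `C δ E^{-(r-1/2)} ∫ V_-^r`. -/
theorem classical_energy_shell_bound (r : ℝ) (hr : 3 / 2 ≤ r) :
    ∃ C > (0 : ℝ), ∀ V : E3 → ℝ, Measurable V → MemLp V (ENNReal.ofReal r) →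
      ∀ E δ : ℝ, 0 < E → 0 < δ → δ ≤ E / 2 →
        volume {z : E3 × E3 | |‖z.2‖ ^ 2 / 2 + V z.1 + E| ≤ δ} ≤
          ENNReal.ofReal (C * δ * E ^ (-(r - 1 / 2)) * ∫ x : E3, max (-V x) 0 ^ r) := by
  set c := (volume (ball (0 : E3) 1)).toReal
  have hc : 0 < c := ENNReal.toReal_pos (measure_ball_pos _ _ one_pos).ne' measure_ball_lt_top.ne
  refine ⟨12 * c * √2 * 2 ^ (r - 1 / 2), by positivity, fun V hV hVr E δ hE hδ hδE => ?_⟩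
  have hr0 : 0 < r := by linarith
  have hint : Integrable (fun x => max (-V x) 0 ^ r) := by
    have := hVr.neg_part.integrable_norm_rpow (by simpa using hr0) ENNReal.ofReal_ne_top
    simpa [ENNReal.toReal_ofReal hr0.le, abs_of_nonneg] using this
  have hS : MeasurableSet {z : E3 × E3 | |‖z.2‖ ^ 2 / 2 + V z.1 + E| ≤ δ} :=
    measurableSet_le (by fun_prop) measurable_const
  rw [← integral_const_mul, Measure.volume_eq_prod]
  exact measure_prod_le_ofReal_integral hS (hint.const_mul _) (ae_of_all _ fun x => by positivity)
    (ae_of_all _ fun q => volume_energy_shell_slice_le (by linarith) hE hδ.le hδE (V q))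

end
end

section
/- (L⁵ bound for the semiclassical Fourier multiplier.) There exists a constant C > 0 such that for every ħ ∈ (0,1], ( ∫_{ℝ³} ( (1 − e^{−ħ|ξ|²}) / |ξ|² )^5 dξ )^{1/5} ≤ C ħ^{7/10}. -/
open MeasureTheory Real

noncomputable section

/-- `L⁵` bound for the semiclassical Fourier multiplier: there is `C > 0` such that for all
`hb ∈ (0,1]`, `(∫ ((1 - e^{-hb|ξ|²})/|ξ|²)^5 dξ)^{1/5} ≤ C hb^{7/10}`. -/
theorem semiclassical_multiplier_L5_bound :
    ∃ C > (0 : ℝ), ∀ hb : ℝ, 0 < hb → hb ≤ 1 →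
      (∫ ξ : E3, ((1 - Real.exp (-hb * ‖ξ‖ ^ 2)) / ‖ξ‖ ^ 2) ^ (5 : ℕ)) ^ ((1 : ℝ) / 5) ≤
        C * hb ^ ((7 : ℝ) / 10) := by
  set g : E3 → ℝ := fun η => ((1 - Real.exp (-‖η‖ ^ 2)) / ‖η‖ ^ 2) ^ (5 : ℕ) with hg
  set I : ℝ := ∫ η : E3, g η with hIdef
  have hI0 : 0 ≤ I := by
    refine integral_nonneg fun η => ?_
    have h1 : Real.exp (-‖η‖ ^ 2) ≤ 1 := Real.exp_le_one_iff.mpr (neg_nonpos.mpr (by positivity))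
    have : (0:ℝ) ≤ (1 - Real.exp (-‖η‖ ^ 2)) / ‖η‖ ^ 2 := by
      apply div_nonneg (by linarith) (by positivity)
    simpa [hg] using pow_nonneg this 5
  refine ⟨I ^ ((1:ℝ)/5) + 1, by positivity, fun hb hb0 hb1 => ?_⟩
  have hbne : hb ≠ 0 := ne_of_gt hb0
  have key : (∫ ξ : E3, ((1 - Real.exp (-hb * ‖ξ‖ ^ 2)) / ‖ξ‖ ^ 2) ^ (5 : ℕ))
      = hb ^ ((7:ℝ)/2) * I := by
    have h1 : ∀ ξ : E3, ((1 - Real.exp (-hb * ‖ξ‖ ^ 2)) / ‖ξ‖ ^ 2) ^ (5 : ℕ)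
        = hb ^ (5 : ℕ) * g ((Real.sqrt hb) • ξ) := by
      intro ξ
      have hξ : ‖(Real.sqrt hb) • ξ‖ ^ 2 = hb * ‖ξ‖ ^ 2 := by
        rw [norm_smul, mul_pow, Real.norm_eq_abs, sq_abs, Real.sq_sqrt hb0.le]
      rw [hg]
      simp only [hξ, ← mul_pow]
      congr 1
      rw [neg_mul, mul_div_assoc', mul_div_mul_left _ _ hbne]
    rw [integral_congr_ae (Filter.Eventually.of_forall h1), integral_const_mul,
      MeasureTheory.Measure.integral_comp_smul volume g (Real.sqrt hb)]
    have hfr : Module.finrank ℝ E3 = 3 := finrank_euclideanSpace_fin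
    rw [hfr, smul_eq_mul, ← mul_assoc]
    congr 1
    have hsq : Real.sqrt hb ^ (3:ℕ) = hb ^ ((3:ℝ)/2) := by
      rw [show Real.sqrt hb = hb ^ ((1:ℝ)/2) from Real.sqrt_eq_rpow hb,
        ← Real.rpow_natCast (hb ^ ((1:ℝ)/2)) 3, ← Real.rpow_mul hb0.le]
      norm_num
    rw [hsq, abs_of_nonneg (by positivity), ← Real.rpow_natCast hb 5,
      ← Real.rpow_neg hb0.le, ← Real.rpow_add hb0]
    norm_num
  rw [key, Real.mul_rpow (by positivity) hI0, ← Real.rpow_mul hb0.le]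
  norm_num
  have h2 : (0:ℝ) ≤ hb ^ ((7:ℝ)/10) := Real.rpow_nonneg hb0.le _
  have h3 : (0:ℝ) ≤ I ^ ((1:ℝ)/5) := Real.rpow_nonneg hI0 _
  nlinarith

end
end
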